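/- Let q > 2 be a prime number. For every complex number s with Re(s) > 1, the Dirichlet series of λ_q satisfies L(s, λ_q) = ζ(qs) · ∏_p ( 1 + ∑_{m=2}^{q-1} (m/q) · p^{-(m-1)s} ), where the product runs over all prime numbers p. -/

import Mathlib

/-!
Since `τ` is multiplicative and the Legendre symbol is completely multiplicative, `λ_q` is
multiplicative and `L(s, λ_q)` has an Euler product. At a prime `p`, `λ_q(p^e) = ((e+1)/q)` is
`q`-periodic in `e`, so with `x = p^{-s}` the local factor is
`∑_e ((e+1)/q) x^e = (1 - x^q)⁻¹ ∑_{d<q} ((d+1)/q) x^d`. The factors `(1 - p^{-qs})⁻¹` multiply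
to `ζ(qs)`, and in the finite sum the term `d = q - 1` vanishes while `d = 0` contributes `1`.
-/

open Filter

/-- `λ_q(n) = (τ(n)/q)` : the Legendre symbol mod `q` of the number of divisors of `n`. -/
noncomputable def lamq (q : ℕ) [Fact q.Prime] (n : ℕ) : ℂ :=
  (legendreSym q (n.divisors.card : ℤ) : ℂ)

open Finset

theorem one_sub_pow_mul_tsum_of_periodic {R : Type*} [CommRing R] [TopologicalSpace R]
    [IsTopologicalRing R] [T2Space R] {f : ℕ → R} {N : ℕ} (hf : Function.Periodic f N) {x : R}
    (hsum : Summable fun e ↦ f e * x ^ e) :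
    (1 - x ^ N) * ∑' e, f e * x ^ e = ∑ d ∈ range N, f d * x ^ d := by
  have hshift : ∑' e, f (e + N) * x ^ (e + N) = x ^ N * ∑' e, f e * x ^ e := by
    rw [← hsum.tsum_mul_left]
    exact tsum_congr fun e ↦ by rw [hf, pow_add]; ring
  have hsplit := hsum.sum_add_tsum_nat_add N
  rw [hshift] at hsplit
  linear_combination -hsplit

theorem LSeries_eulerProduct_hasProd {f : ℕ → ℂ} {s : ℂ} (hf₁ : f 1 = 1)
    (hmul : ∀ {m n : ℕ}, m.Coprime n → f (m * n) = f m * f n) (hsum : LSeriesSummable f s) :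
    HasProd (fun p : Nat.Primes ↦ ∑' e, LSeries.term f s (p ^ e)) (LSeries f s) := by
  refine EulerProduct.eulerProduct_hasProd (by simp [hf₁]) (fun {m n} hmn ↦ ?_) hsum.norm
    (LSeries.term_zero f s)
  rcases eq_or_ne m 0 with rfl | hm
  · simp [(Nat.coprime_zero_left n).mp hmn]
  rcases eq_or_ne n 0 with rfl | hn
  · simp [(Nat.coprime_zero_right m).mp hmn]
  simp only [LSeries.term_of_ne_zero (mul_ne_zero hm hn), LSeries.term_of_ne_zero hm,
    LSeries.term_of_ne_zero hn, hmul hmn, Nat.cast_mul, Complex.natCast_mul_natCast_cpow,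
    mul_div_mul_comm]

section LegendreSym

variable (q : ℕ) [Fact q.Prime]

theorem norm_legendreSym_le_one (a : ℤ) : ‖(legendreSym q a : ℂ)‖ ≤ 1 := by
  rcases quadraticChar_isQuadratic (ZMod q) a with h | h | h <;> simp [legendreSym, h]

theorem legendreSym_natCast_self : legendreSym q (q : ℤ) = 0 :=
  (legendreSym.eq_zero_iff q _).mpr (by simp)

theorem legendreSym_natCast_periodic : Function.Periodic (fun n : ℕ ↦ legendreSym q n) q := by
  intro n
  simp [legendreSym]

theorem sum_range_legendreSym_succ_mul_pow {R : Type*} [CommRing R] (x : R) :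
    ∑ d ∈ range q, (legendreSym q ((d + 1 : ℕ) : ℤ) : R) * x ^ d =
      1 + ∑ m ∈ Icc 2 (q - 1), (legendreSym q (m : ℤ) : R) * x ^ (m - 1) := by
  obtain ⟨k, rfl⟩ : ∃ k, q = k + 2 := ⟨q - 2, by have := (Fact.out : q.Prime).two_le; omega⟩
  rw [sum_range_succ, sum_range_succ', show k + 2 - 1 = k + 1 by omega,
    ← Ico_add_one_right_eq_Icc, sum_Ico_eq_sum_range]
  simp only [zero_add, Nat.cast_one, legendreSym.at_one, show k + 1 + 1 = k + 2 by omega,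
    legendreSym_natCast_self, Int.cast_zero, zero_mul, add_zero, pow_zero, Int.cast_one, one_mul,
    Nat.add_sub_cancel, add_comm 2]
  rw [add_comm]
  rfl

end LegendreSym

section Lamq

variable (q : ℕ) [Fact q.Prime]

theorem lamq_one : lamq q 1 = 1 := by simp [lamq, legendreSym.at_one]

theorem lamq_mul {m n : ℕ} (hmn : m.Coprime n) : lamq q (m * n) = lamq q m * lamq q n := by
  simp [lamq, hmn.card_divisors_mul, legendreSym.mul]

theorem lamq_prime_pow {p : ℕ} (hp : p.Prime) (e : ℕ) :
    lamq q (p ^ e) = legendreSym q ((e + 1 : ℕ) : ℤ) := by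
  simp [lamq, Nat.divisors_prime_pow hp]

theorem LSeriesSummable_lamq {s : ℂ} (hs : 1 < s.re) : LSeriesSummable (lamq q) s :=
  LSeriesSummable_of_bounded_of_one_lt_re (fun _ _ ↦ norm_legendreSym_le_one q _) hs

theorem one_sub_cpow_mul_tsum_term_lamq {p : ℕ} (hp : p.Prime) {s : ℂ} (hs : 1 < s.re) :
    (1 - (p : ℂ) ^ (-((q : ℂ) * s))) * ∑' e, LSeries.term (lamq q) s (p ^ e) =
      1 + ∑ m ∈ Icc 2 (q - 1), (legendreSym q (m : ℤ) : ℂ) * (p : ℂ) ^ (-(((m : ℂ) - 1) * s)) := by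
  set x := (p : ℂ) ^ (-s)
  have hpow (k : ℕ) : (p : ℂ) ^ (-(k * s)) = x ^ k := by rw [← mul_neg, Complex.cpow_nat_mul]
  have hterm (e : ℕ) :
      LSeries.term (lamq q) s (p ^ e) = legendreSym q ((e + 1 : ℕ) : ℤ) * x ^ e := by
    rw [LSeries.term_of_ne_zero (pow_ne_zero _ hp.ne_zero), lamq_prime_pow q hp, Nat.cast_pow,
      ← Complex.natCast_cpow_natCast_mul, div_eq_mul_inv, ← Complex.cpow_neg, hpow]
  have hsum : Summable fun e ↦ LSeries.term (lamq q) s (p ^ e) :=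
    (LSeriesSummable_lamq q hs).comp_injective (Nat.pow_right_injective hp.two_le)
  have hper : Function.Periodic (fun e : ℕ ↦ (legendreSym q ((e + 1 : ℕ) : ℤ) : ℂ)) q :=
    ((legendreSym_natCast_periodic q).add_const 1).comp _
  rw [tsum_congr hterm, hpow,
    one_sub_pow_mul_tsum_of_periodic hper (by simpa only [hterm] using hsum),
    sum_range_legendreSym_succ_mul_pow]
  congr 1
  refine sum_congr rfl fun m hm ↦ ?_
  rw [← hpow, Nat.cast_sub (by grind)]
  push_cast
  ring_nf

end Lamq

theorem dirichlet_series_lamq (q : ℕ) [Fact q.Prime] (s : ℂ) (hs : 1 < s.re) :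
    LSeries (lamq q) s =
      riemannZeta (q * s) *
        ∏' p : Nat.Primes,
          (1 + ∑ m ∈ Finset.Icc 2 (q - 1),
            (legendreSym q (m : ℤ) : ℂ) * ((p : ℕ) : ℂ) ^ (-(((m : ℂ) - 1) * s))) := by
  have hqs : 1 < ((q : ℂ) * s).re := by
    have hq : (2 : ℝ) ≤ q := by exact_mod_cast (Fact.out : q.Prime).two_le
    rw [← Complex.ofReal_natCast, Complex.re_ofReal_mul]
    nlinarith
  have hζ := riemannZeta_ne_zero_of_one_lt_re hqs
  have hprod := (((riemannZeta_eulerProduct_hasProd hqs).inv₀ hζ).mul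
    (LSeries_eulerProduct_hasProd (lamq_one q) (lamq_mul q) (LSeriesSummable_lamq q hs))).tprod_eq
  simp only [inv_inv, fun p : Nat.Primes ↦ one_sub_cpow_mul_tsum_term_lamq q p.2 hs] at hprod
  rw [hprod, mul_inv_cancel_left₀ hζ]
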